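/- arXiv:2011.00706 — 2 statements merged into one kernel-verified Lean document; each statement's English description precedes it below -/
import Mathlib

section
/- Let π ∈ S_n, let p be a divisor of n, and suppose the difference sequence of π is periodic with a period dividing p. Then the map π_p : Z_p → Z_p determined by π_p(i) ≡ π(i) (mod p) is well defined and is a permutation of Z_p. -/
/-!
If the increments `π (k + 1) - π k` are `p`-periodic, then `π (k + p) - π k` is a constant `c`,
so `π (k + t * p) = π k + t * c`. Taking `t = n / p` gives `(n / p) * c = 0` in `ZMod n`, that
is `p ∣ c`; hence `π` preserves congruence mod `p`, and the map it induces on `ZMod p` is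
surjective because `π` is, so bijective.
-/

/-- The representative of `x : ZMod n` in `{1, …, n}` (so `0` represents `n`). -/
def repr1 (n : ℕ) (x : ZMod n) : ℕ := if x = 0 then n else x.val

/-- Values of `ZMod n`, embedded into `ZMod (n+1)` via representatives in `{1, …, n}`. -/
def emb (n : ℕ) (x : ZMod n) : ZMod (n + 1) := (repr1 n x : ZMod (n + 1))

/-- `L 0 = 0` and `L i = π(i)` for `i ∈ {1,…,n}`: the listing used to build
the cycle `Y_π = (π(n) π(n−1) … π(1) 0)`. -/
def listFun (n : ℕ) (π : Equiv.Perm (ZMod n)) : ZMod (n + 1) → ZMod (n + 1) :=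
  fun i => if i = 0 then 0 else emb n (π (i.val : ZMod n))

/-- The inverse listing of `listFun`. -/
def listInv (n : ℕ) (π : Equiv.Perm (ZMod n)) : ZMod (n + 1) → ZMod (n + 1) :=
  fun y => if y = 0 then 0 else emb n (π.symm (y.val : ZMod n))

/-- The cycle `Y_π = (π(n) π(n−1) … π(1) 0)` on `{0,1,…,n}`, as a function:
it sends `L(i)` to `L(i-1)`. -/
def Yfun (n : ℕ) (π : Equiv.Perm (ZMod n)) : ZMod (n + 1) → ZMod (n + 1) :=
  fun y => listFun n π (listInv n π y - 1)

/-- `C_π = Y_π ∘ X_n`, where `X_n` is the cycle `(0 1 2 … n)`, i.e. `x ↦ x + 1`. -/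
def Cfun (n : ℕ) (π : Equiv.Perm (ZMod n)) : ZMod (n + 1) → ZMod (n + 1) :=
  fun x => Yfun n π (x + 1)

/-- The strategic pile of `π ∈ S_n`: the set of values appearing strictly after `n` and
strictly before `0` on the cycle of `C_π` containing `0` and `n` (empty if `0` and `n`
lie in different cycles). -/
def strategicPile (n : ℕ) (π : Equiv.Perm (ZMod n)) : Set (ZMod (n + 1)) :=
  {x | ∃ k m : ℕ, 0 < k ∧ k < m ∧ (Cfun n π)^[m] (n : ZMod (n + 1)) = 0 ∧
      (∀ j, 0 < j → j < m → (Cfun n π)^[j] (n : ZMod (n + 1)) ≠ 0) ∧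
      (Cfun n π)^[k] (n : ZMod (n + 1)) = x}

/-- `π ∈ S_n` has maximal strategic pile. -/
def MaxPile (n : ℕ) (π : Equiv.Perm (ZMod n)) : Prop :=
  (Even n ∧ (strategicPile n π).ncard = n - 1) ∨
  (Odd n ∧ (strategicPile n π).ncard = n - 2)

/-- The position (in `{1,…,n}`) of the value `v` in `π`. -/
def idx (n : ℕ) (π : Equiv.Perm (ZMod n)) (v : ZMod n) : ℕ := repr1 n (π.symm v)

/-- Word coordinate of the occurrence of the pointer `(p,p+1)` as the right pointer of the
entry `p`:  the entry at position `i` is given word coordinate `3*i - 1`, its left pointer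
coordinate `3*i - 2` and its right pointer coordinate `3*i`. -/
def posR (n : ℕ) (π : Equiv.Perm (ZMod n)) (p : ZMod n) : ℕ := 3 * idx n π p

/-- Word coordinate of the occurrence of the pointer `(p,p+1)` as the left pointer of the
entry `p+1`. -/
def posL (n : ℕ) (π : Equiv.Perm (ZMod n)) (p : ZMod n) : ℕ := 3 * idx n π (p + 1) - 2

/-- Two pairs of positions interleave (pattern `a b a b` or `b a b a`). -/
def Interleaved (a1 a2 b1 b2 : ℕ) : Prop :=
  (min a1 a2 < min b1 b2 ∧ min b1 b2 < max a1 a2 ∧ max a1 a2 < max b1 b2) ∨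
  (min b1 b2 < min a1 a2 ∧ min a1 a2 < max b1 b2 ∧ max b1 b2 < max a1 a2)

/-- `(p, q)` is a valid pointer context for `π`: the two pointers are distinct and their
occurrences in the pointer word of `π` appear in the order `p,q,p,q` or `q,p,q,p`. -/
def ValidContext (n : ℕ) (π : Equiv.Perm (ZMod n)) (p q : ZMod n) : Prop :=
  p ≠ q ∧ Interleaved (posR n π p) (posL n π p) (posR n π q) (posL n π q)

/-- The number of (unordered) valid pointer contexts of `π`. -/
noncomputable def numContexts (n : ℕ) (π : Equiv.Perm (ZMod n)) : ℕ :=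
  {pq : ZMod n × ZMod n | ValidContext n π pq.1 pq.2}.ncard / 2

/-- `ρ ∈ S_{2n−1}` is the contraction of `π ∈ S_{2n}`, obtained by deleting the entry `2n`. -/
def IsContraction (n : ℕ) (ρ : Equiv.Perm (ZMod (2 * n - 1)))
    (π : Equiv.Perm (ZMod (2 * n))) : Prop :=
  ∃ m : ℕ, 1 ≤ m ∧ m ≤ 2 * n ∧ π (m : ZMod (2 * n)) = ((2 * n : ℕ) : ZMod (2 * n)) ∧
    (∀ k : ℕ, 1 ≤ k → k < m →
      ρ (k : ZMod (2 * n - 1)) =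
        ((repr1 (2 * n) (π (k : ZMod (2 * n))) : ℕ) : ZMod (2 * n - 1))) ∧
    (∀ k : ℕ, m ≤ k → k ≤ 2 * n - 1 →
      ρ (k : ZMod (2 * n - 1)) =
        ((repr1 (2 * n) (π ((k + 1 : ℕ) : ZMod (2 * n))) : ℕ) : ZMod (2 * n - 1)))

/-- `M_{2n}`: the contractions of permutations in `S_{2n}` with maximal strategic pile. -/
def MsetAll (n : ℕ) : Set (Equiv.Perm (ZMod (2 * n - 1))) :=
  {ρ | ∃ π : Equiv.Perm (ZMod (2 * n)), MaxPile (2 * n) π ∧ IsContraction n ρ π}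

/-- `M_{2n,k}`: the contractions of permutations in `S_{2n}` with maximal strategic pile
and exactly `k` valid pointer contexts. -/
def Mset (n k : ℕ) : Set (Equiv.Perm (ZMod (2 * n - 1))) :=
  {ρ | ρ ∈ MsetAll n ∧ numContexts (2 * n - 1) ρ = k}

/-- Cyclic shift by `a`: `C_a(π)(x) = π(x - a)`. -/
def Cshift (n : ℕ) (a : ZMod n) (π : Equiv.Perm (ZMod n)) : Equiv.Perm (ZMod n) :=
  (Equiv.subRight a).trans π

/-- Translation by `b`: `T_b(π)(x) = π(x) + b`. -/
def Tshift (n : ℕ) (b : ZMod n) (π : Equiv.Perm (ZMod n)) : Equiv.Perm (ZMod n) :=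
  π.trans (Equiv.addRight b)

/-- `φ(a,b,π) = C_a(T_b(π))`, i.e. `x ↦ π(x-a) + b`. -/
def phiAct (n : ℕ) (a b : ZMod n) (π : Equiv.Perm (ZMod n)) : Equiv.Perm (ZMod n) :=
  Cshift n a (Tshift n b π)

/-- The difference sequence of `π`. -/
def Dseq (n : ℕ) (π : Equiv.Perm (ZMod n)) : ZMod n → ZMod n :=
  fun k => π (k + 1) - π k

/-- The difference sequence of `π` is periodic with (least) period `p`, `0 < p < n`. -/
def PeriodicWith (n : ℕ) (π : Equiv.Perm (ZMod n)) (p : ℕ) : Prop :=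
  0 < p ∧ p < n ∧ (∀ k : ZMod n, Dseq n π (k + (p : ZMod n)) = Dseq n π k) ∧
    ∀ q : ℕ, 0 < q → q < p → ¬ ∀ k : ZMod n, Dseq n π (k + (q : ZMod n)) = Dseq n π k

theorem map_add_nsmul_of_map_add {M N : Type*} [AddMonoid M] [AddMonoid N] {f : M → N}
    {a : M} {c : N} (h : ∀ x, f (x + a) = f x + c) (t : ℕ) (x : M) :
    f (x + t • a) = f x + t • c := by
  have hsemi : Function.Semiconj f (· + a) (· + c) := h
  simpa only [add_right_iterate] using hsemi.iterate_right t x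

namespace ZMod

variable {n p : ℕ}

theorem apply_eq_apply_zero_of_periodic_one {α : Type*} {g : ZMod n → α}
    (h : Function.Periodic g 1) (k : ZMod n) : g k = g 0 := by
  simpa only [mul_one, intCast_zmod_cast] using h.int_mul_eq (cast k : ℤ)

theorem apply_add_eq_of_periodic_sub {G : Type*} [AddCommGroup G] {f : ZMod n → G} {a : ZMod n}
    (h : ∀ k, f (k + a + 1) - f (k + a) = f (k + 1) - f k) (k : ZMod n) :
    f (k + a) = f k + (f a - f 0) := by
  have hconst : Function.Periodic (fun k => f (k + a) - f k) 1 := fun k => by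
    simpa only [add_right_comm k 1 a, sub_eq_sub_iff_sub_eq_sub] using h k
  have hk := apply_eq_apply_zero_of_periodic_one hconst k
  rw [zero_add] at hk
  exact eq_add_of_sub_eq' hk

theorem castHom_eq_zero_iff_dvd_val [NeZero n] (hdvd : p ∣ n) (z : ZMod n) :
    castHom hdvd (ZMod p) z = 0 ↔ p ∣ z.val := by
  rw [castHom_apply, cast_eq_val, natCast_eq_zero_iff]

theorem dvd_val_of_nsmul_eq_zero [NeZero n] {m : ℕ} (hmp : m * p = n) {c : ZMod n}
    (hc : m • c = 0) : p ∣ c.val := by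
  have hm : 0 < m := Nat.pos_of_ne_zero (by rintro rfl; exact NeZero.ne n (by simp [← hmp]))
  have hn : n ∣ m * c.val := by
    rwa [← natCast_eq_zero_iff, Nat.cast_mul, natCast_zmod_val, ← nsmul_eq_mul]
  exact Nat.dvd_of_mul_dvd_mul_left hm (hmp ▸ hn)

theorem castHom_apply_eq_of_periodic_sub [NeZero n] (hdvd : p ∣ n) {f : ZMod n → ZMod n}
    (h : ∀ k, f (k + p + 1) - f (k + p) = f (k + 1) - f k) {x y : ZMod n}
    (hxy : castHom hdvd (ZMod p) x = castHom hdvd (ZMod p) y) :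
    castHom hdvd (ZMod p) (f x) = castHom hdvd (ZMod p) (f y) := by
  set c := f p - f 0
  have hshift : ∀ t : ℕ, ∀ k, f (k + t • (p : ZMod n)) = f k + t • c :=
    map_add_nsmul_of_map_add (apply_add_eq_of_periodic_sub h)
  have hc : castHom hdvd (ZMod p) c = 0 := by
    refine (castHom_eq_zero_iff_dvd_val hdvd c).2
      (dvd_val_of_nsmul_eq_zero (Nat.div_mul_cancel hdvd) ?_)
    have h0 := hshift (n / p) 0
    rwa [nsmul_eq_mul, ← Nat.cast_mul, Nat.div_mul_cancel hdvd, natCast_self, zero_add,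
      left_eq_add] at h0
  obtain ⟨t, ht⟩ := (castHom_eq_zero_iff_dvd_val hdvd (y - x)).1 (by rw [map_sub, hxy, sub_self])
  have hy : y = x + t • (p : ZMod n) := by
    rw [nsmul_eq_mul, ← Nat.cast_mul, mul_comm, ← ht, natCast_zmod_val, add_sub_cancel]
  rw [hy, hshift, map_add, map_nsmul, hc, nsmul_zero, add_zero]

end ZMod

theorem Function.Surjective.exists_bijective_factor {α β : Type*} [Finite β] {q : α → β}
    (hq : q.Surjective) {g : α → α} (hg : g.Surjective)
    (h : ∀ x y, q x = q y → q (g x) = q (g y)) :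
    ∃ f : β → β, f.Bijective ∧ ∀ x, f (q x) = q (g x) := by
  have hfac : ∀ x, q (g (surjInv hq (q x))) = q (g x) := fun x => h _ _ (surjInv_eq hq _)
  refine ⟨fun b => q (g (surjInv hq b)), Finite.surjective_iff_bijective.1 fun b => ?_, hfac⟩
  obtain ⟨a, rfl⟩ := hq b
  obtain ⟨x, rfl⟩ := hg a
  exact ⟨q x, hfac x⟩

theorem natCast_repr1 {n p : ℕ} [NeZero n] (hdvd : p ∣ n) (x : ZMod n) :
    ((repr1 n x : ℕ) : ZMod p) = ZMod.castHom hdvd (ZMod p) x := by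
  unfold repr1
  split_ifs with hx
  · rw [hx, map_zero, ZMod.natCast_eq_zero_iff]
    exact hdvd
  · rw [ZMod.castHom_apply, ZMod.cast_eq_val]

theorem stmt9_general (n p : ℕ) (hn : 0 < n) (hdvd : p ∣ n)
    (π : Equiv.Perm (ZMod n))
    (hper : ∀ k : ZMod n, Dseq n π (k + (p : ZMod n)) = Dseq n π k) :
    ∃ f : ZMod p → ZMod p, Function.Bijective f ∧
      ∀ i : ZMod n, f ((repr1 n i : ℕ) : ZMod p) = ((repr1 n (π i) : ℕ) : ZMod p) := by
  have : NeZero n := ⟨hn.ne'⟩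
  have : NeZero p := ⟨(Nat.pos_of_dvd_of_pos hdvd hn).ne'⟩
  obtain ⟨f, hf, hfac⟩ := (ZMod.castHom_surjective hdvd).exists_bijective_factor π.surjective
    fun _ _ => ZMod.castHom_apply_eq_of_periodic_sub hdvd hper
  exact ⟨f, hf, fun i => by simpa only [natCast_repr1 hdvd] using hfac i⟩

/-- Let `π ∈ S_n`, let `p ∣ n`, and suppose the difference sequence of `π`
is periodic with a period dividing `p`.  Then the map `π_p : Z_p → Z_p` determined by
`π_p(i) ≡ π(i) (mod p)` is well defined and is a permutation of `Z_p`. -/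
theorem stmt9 (n p : ℕ) (hn : 0 < n) (hp : 0 < p) (hdvd : p ∣ n)
    (π : Equiv.Perm (ZMod n))
    (hper : ∀ k : ZMod n, Dseq n π (k + (p : ZMod n)) = Dseq n π k) :
    ∃ f : ZMod p → ZMod p, Function.Bijective f ∧
      ∀ i : ZMod n, f ((repr1 n i : ℕ) : ZMod p) = ((repr1 n (π i) : ℕ) : ZMod p) :=
  stmt9_general n p hn hdvd π hper
end

section
/- Let π ∈ M_{2n} have difference sequence periodic with period p. Then the number of valid pointer contexts of π is a multiple of (2n−1)/p. -/
/-! The least period `p` of the difference sequence divides `N = 2n-1`, and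
`π (k + p) = π k + s` for a constant `s`. Adding `s` to every value therefore rotates the
pointer word cyclically by `3p` letters, which preserves interleaving, so `(a, b) ↦ (a + s, b + s)`
permutes the ordered valid contexts. This translation has order `N / p`, so `N / p` divides the
number of ordered contexts, which is twice the number of contexts; as `N / p` is odd, it divides
the number of contexts itself. -/

open Function

section Periodicity

variable {N : ℕ}

theorem Function.Periodic.natCast_gcd {α : Type*} {f : ZMod N → α} {p : ℕ}
    (h : Periodic f (p : ZMod N)) : Periodic f (Nat.gcd p N : ZMod N) := by
  have hbezout : (Nat.gcd p N : ZMod N) = (Nat.gcdA p N : ZMod N) * p := by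
    have := congrArg (Int.cast : ℤ → ZMod N) (Nat.gcd_eq_gcd_ab p N)
    push_cast [ZMod.natCast_self] at this
    rw [this, mul_comm, zero_mul, add_zero]
  rw [hbezout]
  exact h.int_mul _

theorem Function.Periodic.apply_eq_apply_zero [NeZero N] {α : Type*} {f : ZMod N → α}
    (h : Periodic f 1) (k : ZMod N) : f k = f 0 := by
  simpa using h.nat_mul k.val 0

variable {π : Equiv.Perm (ZMod N)} {p : ℕ}

theorem PeriodicWith.dvd (h : PeriodicWith N π p) : p ∣ N := by
  obtain ⟨hp, -, hperiodic, hleast⟩ := h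
  have hgcd : Nat.gcd p N = p := by
    by_contra hne
    exact hleast _ (Nat.gcd_pos_of_pos_left N hp) ((Nat.gcd_le_left N hp).lt_of_ne hne)
      (Periodic.natCast_gcd hperiodic)
  exact hgcd ▸ Nat.gcd_dvd_right p N

theorem PeriodicWith.apply_add_period [NeZero N] (h : PeriodicWith N π p) (k : ZMod N) :
    π (k + p) = π k + (π p - π 0) := by
  have hconst : Periodic (fun k => π (k + p) - π k) 1 := fun k => by
    have := h.2.2.1 k
    simp only [Dseq] at this
    show π (k + 1 + p) - π (k + 1) = π (k + p) - π k
    rw [add_right_comm]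
    linear_combination this
  have := hconst.apply_eq_apply_zero k
  simp only [zero_add] at this
  linear_combination this

end Periodicity

theorem addOrderOf_eq_of_apply_add {G H : Type*} [AddGroup G] [AddGroup H] (f : G ≃ H)
    {c : G} {s : H} (hf : ∀ x, f (x + c) = f x + s) : addOrderOf s = addOrderOf c := by
  have hiterate : ∀ n : ℕ, f (n • c) = f 0 + n • s := by
    intro n
    induction n with
    | zero => simp
    | succ n ih => rw [succ_nsmul, hf, ih, succ_nsmul, add_assoc]
  refine addOrderOf_eq_addOrderOf_iff.mpr fun n => ?_
  rw [← add_eq_left (a := f 0), ← hiterate, f.apply_eq_iff_eq]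

theorem addOrderOf_dvd_ncard {G : Type*} [AddGroup G] [Finite G] {S : Set G} {g : G}
    (hS : ∀ x, x + g ∈ S ↔ x ∈ S) : addOrderOf g ∣ S.ncard := by
  have hzsmul : ∀ (z : ℤ) (x : G), x + z • g ∈ S ↔ x ∈ S := by
    intro z
    induction z using Int.induction_on with
    | zero => simp
    | succ z ih => intro x; rw [add_zsmul, one_zsmul, ← add_assoc, hS, ih]
    | pred z ih => intro x; rw [← hS, ← ih x, add_assoc, sub_zsmul, one_zsmul, neg_add_cancel_right]
  set H := AddSubgroup.zmultiples g
  have hsaturated : QuotientAddGroup.mk ⁻¹' (QuotientAddGroup.mk '' S : Set (G ⧸ H)) = S := by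
    ext x
    refine ⟨fun ⟨y, hy, hxy⟩ => ?_, fun hx => ⟨x, hx, rfl⟩⟩
    obtain ⟨z, hz⟩ := AddSubgroup.mem_zmultiples_iff.mp (QuotientAddGroup.eq.mp hxy)
    rw [← add_neg_cancel_left y x, ← hz]
    exact (hzsmul z y).mpr hy
  rw [← Nat.card_coe_set_eq, ← hsaturated,
    Nat.card_congr (QuotientAddGroup.preimageMkEquivAddSubgroupProdSet H _), Nat.card_prod,
    Nat.card_zmultiples]
  exact dvd_mul_right _ _

theorem SimpleGraph.ncard_setOf_adj {V : Type*} [Finite V] (G : SimpleGraph V) :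
    {pq : V × V | G.Adj pq.1 pq.2}.ncard = 2 * G.edgeSet.ncard := by
  classical
  have : Fintype V := Fintype.ofFinite V
  have hdarts : {pq : V × V | G.Adj pq.1 pq.2} = Set.range (Dart.toProd : G.Dart → V × V) := by
    ext pq
    exact ⟨fun h => ⟨⟨pq, h⟩, rfl⟩, by rintro ⟨d, rfl⟩; exact d.adj⟩
  rw [hdarts, Set.ncard_range_of_injective Dart.toProd_injective, Nat.card_eq_fintype_card,
    G.dart_card_eq_twice_card_edges, edgeFinset_card, ← Nat.card_eq_fintype_card,
    Nat.card_coe_set_eq]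

/-- The pointer `(p, p + 1)` occurs in the word as the right pointer of the entry at position
`x = π⁻¹ p` and as the left pointer of the entry at position `y = π⁻¹ (p + 1)`. -/
def PositionsInterleave (N : ℕ) (x y z w : ZMod N) : Prop :=
  Interleaved (3 * repr1 N x) (3 * repr1 N y - 2) (3 * repr1 N z) (3 * repr1 N w - 2)

section PointerWord

variable {N : ℕ}

theorem validContext_iff {π : Equiv.Perm (ZMod N)} {a b : ZMod N} :
    ValidContext N π a b ↔
      a ≠ b ∧ PositionsInterleave N (π.symm a) (π.symm (a + 1)) (π.symm b) (π.symm (b + 1)) :=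
  Iff.rfl

variable [NeZero N]

theorem natCast_repr1_s14 (x : ZMod N) : (repr1 N x : ZMod N) = x := by
  unfold repr1
  split_ifs with h
  · rw [ZMod.natCast_self, h]
  · exact ZMod.natCast_zmod_val x

theorem one_le_repr1 (x : ZMod N) : 1 ≤ repr1 N x := by
  unfold repr1
  split_ifs with h
  · exact NeZero.one_le
  · exact Nat.one_le_iff_ne_zero.mpr ((ZMod.val_ne_zero x).mpr h)

theorem repr1_le (x : ZMod N) : repr1 N x ≤ N := by
  unfold repr1
  split_ifs
  · exact le_rfl
  · exact (ZMod.val_lt x).le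

theorem repr1_injective : Injective (repr1 N) := fun x y h => by
  rw [← natCast_repr1_s14 x, h, natCast_repr1_s14]

theorem repr1_natCast {m : ℕ} (h1 : 1 ≤ m) (h2 : m ≤ N) : repr1 N m = m := by
  rcases h2.lt_or_eq with h | rfl
  · have hne : (m : ZMod N) ≠ 0 := by
      rw [Ne, ZMod.natCast_eq_zero_iff]
      exact Nat.not_dvd_of_pos_of_lt h1 h
    rw [repr1, if_neg hne, ZMod.val_natCast_of_lt h]
  · simp [repr1]

theorem repr1_add_one (x : ZMod N) :
    repr1 N (x + 1) = if repr1 N x = N then 1 else repr1 N x + 1 := by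
  have hle := repr1_le x
  split_ifs with h
  · have hx : x = 0 := by rw [← natCast_repr1_s14 x, h, ZMod.natCast_self]
    rw [hx, zero_add, ← Nat.cast_one, repr1_natCast le_rfl NeZero.one_le]
  · conv_lhs => rw [← natCast_repr1_s14 x]
    rw [← Nat.cast_succ, repr1_natCast (by omega) (by omega)]

/-- Adding one to every position moves the last entry of the word to the front, and a cyclic
rotation of a word does not change which pairs of letters interleave. -/
theorem positionsInterleave_add_one {x y z w : ZMod N} (hxz : x ≠ z) (hyw : y ≠ w) :
    PositionsInterleave N (x + 1) (y + 1) (z + 1) (w + 1) ↔ PositionsInterleave N x y z w := by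
  have := repr1_injective.ne hxz
  have := repr1_injective.ne hyw
  have := one_le_repr1 x; have := one_le_repr1 y; have := one_le_repr1 z; have := one_le_repr1 w
  have := repr1_le x; have := repr1_le y; have := repr1_le z; have := repr1_le w
  simp only [PositionsInterleave, Interleaved, repr1_add_one]
  split_ifs <;> omega

theorem positionsInterleave_add {x y z w : ZMod N} (hxz : x ≠ z) (hyw : y ≠ w) (c : ZMod N) :
    PositionsInterleave N (x + c) (y + c) (z + c) (w + c) ↔ PositionsInterleave N x y z w := by
  rw [← ZMod.natCast_zmod_val c]
  induction c.val with
  | zero => simp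
  | succ m ih =>
    push_cast
    simp only [← add_assoc]
    rw [positionsInterleave_add_one (by simpa using hxz) (by simpa using hyw), ih]

theorem validContext_add_iff {π : Equiv.Perm (ZMod N)} {s c : ZMod N}
    (hπ : ∀ v, π.symm (v + s) = π.symm v + c) (a b : ZMod N) :
    ValidContext N π (a + s) (b + s) ↔ ValidContext N π a b := by
  rw [validContext_iff, validContext_iff, (add_left_injective s).ne_iff]
  refine and_congr_right fun hab => ?_
  rw [add_right_comm a, add_right_comm b, hπ, hπ, hπ, hπ]
  exact positionsInterleave_add (π.symm.injective.ne hab)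
    (π.symm.injective.ne ((add_left_injective 1).ne hab)) c

end PointerWord

def contextGraph (N : ℕ) (π : Equiv.Perm (ZMod N)) : SimpleGraph (ZMod N) where
  Adj := ValidContext N π
  symm := ⟨fun _ _ h => ⟨h.1.symm, Or.symm h.2⟩⟩
  loopless := ⟨fun _ h => h.1 rfl⟩

theorem two_mul_numContexts {N : ℕ} [NeZero N] (π : Equiv.Perm (ZMod N)) :
    2 * numContexts N π = {pq : ZMod N × ZMod N | ValidContext N π pq.1 pq.2}.ncard := by
  have h : {pq : ZMod N × ZMod N | ValidContext N π pq.1 pq.2}.ncard =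
      2 * (contextGraph N π).edgeSet.ncard :=
    (contextGraph N π).ncard_setOf_adj
  rw [numContexts, h]
  omega

theorem PeriodicWith.div_dvd_numContexts {N p : ℕ} {π : Equiv.Perm (ZMod N)} (hN : Odd N)
    (hper : PeriodicWith N π p) : N / p ∣ numContexts N π := by
  have : NeZero N := ⟨hN.pos.ne'⟩
  set s := π p - π 0
  have hshift : ∀ v, π.symm (v + s) = π.symm v + p := fun v =>
    π.symm_apply_eq.mpr (by rw [hper.apply_add_period, π.apply_symm_apply])
  have horder : addOrderOf (s, s) = N / p := by
    rw [Prod.addOrderOf, Nat.lcm_self, addOrderOf_eq_of_apply_add π hper.apply_add_period,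
      ZMod.addOrderOf_coe _ hN.pos.ne', Nat.gcd_eq_right hper.dvd]
  have hdvd : N / p ∣ 2 * numContexts N π := by
    rw [two_mul_numContexts, ← horder]
    exact addOrderOf_dvd_ncard fun x => validContext_add_iff hshift x.1 x.2
  have hodd : Odd (N / p) := hN.of_dvd_nat (Nat.div_dvd_of_dvd hper.dvd)
  exact (Nat.coprime_two_right.mpr hodd).dvd_of_dvd_mul_left hdvd

theorem stmt14_general (n p : ℕ) (hn : 0 < n) (π : Equiv.Perm (ZMod (2 * n - 1)))
    (hper : PeriodicWith (2 * n - 1) π p) :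
    ((2 * n - 1) / p) ∣ numContexts (2 * n - 1) π :=
  hper.div_dvd_numContexts ⟨n - 1, by omega⟩

/-- Let `π ∈ M_{2n}` have difference sequence periodic with period `p`.
Then the number of valid pointer contexts of `π` is a multiple of `(2n-1)/p`. -/
theorem stmt14 (n p : ℕ) (hn : 0 < n) (π : Equiv.Perm (ZMod (2 * n - 1)))
    (hπ : π ∈ MsetAll n) (hper : PeriodicWith (2 * n - 1) π p) :
    ((2 * n - 1) / p) ∣ numContexts (2 * n - 1) π :=
  stmt14_general n p hn π hper
end
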